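/- Define the linear map μ on the space of real arrays (X^i_{jk}) (i, j, k ∈ {1,2}) symmetric in j, k by μ(X)^i_{jk} = (1/3)(δ^i_j Σ_r X^r_{kr} + δ^i_k Σ_r X^r_{jr}), where δ is the Kronecker symbol. Then μ is a projection onto g²: the image of μ equals g², the restriction of μ to g² is the identity, and consequently μ ∘ μ = μ. -/

import Mathlib

/-!
With `σ(a)^i_{jk} = δ^i_j a_k + δ^i_k a_j` and `c(X)_k = Σ_r X^r_{kr}` one has `μ = σ ∘ c / 3`.
In dimension `n`, `c(σ(a)) = (n + 1) a`, so for `n = 2` the map `μ` fixes every `σ(a)`; and the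
four equations defining g² say exactly that `X = σ(a)` for some covector `a`.
-/

/-- The space g² of arrays (X^i_{jk}), symmetric in the lower indices, satisfying
X²₁₁ = 0, X¹₁₁ − 2X²₁₂ = 0, 2X¹₁₂ − X²₂₂ = 0, X¹₂₂ = 0.
(Index value `0` stands for `1`, index value `1` stands for `2`.) -/
def g2 : Submodule ℝ (Fin 2 → Fin 2 → Fin 2 → ℝ) where
  carrier := {X | (∀ i j k, X i j k = X i k j) ∧
    X 1 0 0 = 0 ∧ X 0 0 0 - 2 * X 1 0 1 = 0 ∧ 2 * X 0 0 1 - X 1 1 1 = 0 ∧ X 0 1 1 = 0}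
  add_mem' := by
    rintro X Y ⟨hs, h1, h2, h3, h4⟩ ⟨hs', h1', h2', h3', h4'⟩
    refine ⟨fun i j k => ?_, ?_, ?_, ?_, ?_⟩ <;>
      simp only [Pi.add_apply] <;>
      first
        | rw [hs i j k, hs' i j k]
        | linarith
  zero_mem' := ⟨fun i j k => rfl, by norm_num, by norm_num, by norm_num, by norm_num⟩
  smul_mem' := by
    rintro c X ⟨hs, h1, h2, h3, h4⟩
    refine ⟨fun i j k => ?_, ?_, ?_, ?_, ?_⟩ <;>
      simp only [Pi.smul_apply, smul_eq_mul] <;>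
      first
        | rw [hs i j k]
        | linear_combination c * h1
        | linear_combination c * h2
        | linear_combination c * h3
        | linear_combination c * h4

/-- μ(X)^i_{jk} = (1/3)(δ^i_j Σ_r X^r_{kr} + δ^i_k Σ_r X^r_{jr}). -/
noncomputable def mu (X : Fin 2 → Fin 2 → Fin 2 → ℝ) : Fin 2 → Fin 2 → Fin 2 → ℝ :=
  fun i j k =>
    (1 / 3) * ((if i = j then (1 : ℝ) else 0) * ∑ r, X r k r
      + (if i = k then (1 : ℝ) else 0) * ∑ r, X r j r)

section Contraction

variable {R ι : Type*} [CommSemiring R] [Fintype ι] [DecidableEq ι]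

def kroneckerSym (a : ι → R) : ι → ι → ι → R :=
  fun i j k => (if i = j then 1 else 0) * a k + (if i = k then 1 else 0) * a j

def contract (X : ι → ι → ι → R) : ι → R :=
  fun k => ∑ r, X r k r

theorem contract_kroneckerSym (a : ι → R) :
    contract (kroneckerSym a) = (Fintype.card ι + 1 : R) • a := by
  funext k
  simp [contract, kroneckerSym, Finset.sum_add_distrib, add_mul, add_comm]

end Contraction

theorem mu_eq_kroneckerSym_contract (X : Fin 2 → Fin 2 → Fin 2 → ℝ) :
    mu X = kroneckerSym ((1 / 3 : ℝ) • contract X) := by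
  funext i j k
  simp only [mu, kroneckerSym, contract, Pi.smul_apply, smul_eq_mul]
  ring

theorem mu_kroneckerSym (a : Fin 2 → ℝ) : mu (kroneckerSym a) = kroneckerSym a := by
  rw [mu_eq_kroneckerSym_contract, contract_kroneckerSym, smul_smul]
  norm_num

theorem mem_g2_iff (X : Fin 2 → Fin 2 → Fin 2 → ℝ) : X ∈ g2 ↔ ∃ a, kroneckerSym a = X := by
  constructor
  · rintro ⟨hs, h100, h000, h001, h011⟩
    refine ⟨![X 1 0 1, X 0 0 1], funext fun i => funext fun j => funext fun k => ?_⟩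
    fin_cases i <;> fin_cases j <;> fin_cases k <;> simp [kroneckerSym] <;>
      linarith [hs 0 0 1, hs 1 0 1]
  · rintro ⟨a, rfl⟩
    refine ⟨fun i j k => by simp only [kroneckerSym]; ring, ?_, ?_, ?_, ?_⟩ <;>
      simp [kroneckerSym] <;> ring

theorem mu_mem_g2 (X : Fin 2 → Fin 2 → Fin 2 → ℝ) : mu X ∈ g2 :=
  (mem_g2_iff _).2 ⟨_, (mu_eq_kroneckerSym_contract X).symm⟩

theorem mu_eq_self_of_mem_g2 {X : Fin 2 → Fin 2 → Fin 2 → ℝ} (hX : X ∈ g2) : mu X = X := by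
  obtain ⟨a, rfl⟩ := (mem_g2_iff X).1 hX
  exact mu_kroneckerSym a

/-- μ maps the symmetric arrays into g², its image is all of g², it restricts to the
identity on g², and consequently μ ∘ μ = μ on symmetric arrays. -/
theorem stmt10 :
    (∀ X : Fin 2 → Fin 2 → Fin 2 → ℝ, (∀ i j k, X i j k = X i k j) → mu X ∈ g2) ∧
    (∀ Y ∈ g2, ∃ X : Fin 2 → Fin 2 → Fin 2 → ℝ,
      (∀ i j k, X i j k = X i k j) ∧ mu X = Y) ∧
    (∀ X ∈ g2, mu X = X) ∧
    (∀ X : Fin 2 → Fin 2 → Fin 2 → ℝ, (∀ i j k, X i j k = X i k j) →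
      mu (mu X) = mu X) :=
  ⟨fun X _ => mu_mem_g2 X,
    fun Y hY => ⟨Y, hY.1, mu_eq_self_of_mem_g2 hY⟩,
    fun _ hX => mu_eq_self_of_mem_g2 hX,
    fun X _ => mu_eq_self_of_mem_g2 (mu_mem_g2 X)⟩
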